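/- Let G and H be graphs with chromatic colourings on disjoint colour sets of sizes χ(G) and χ(H) respectively, and consider the induced colouring of the join G + H with χ(G) + χ(H) colours. A vertex v ∈ V(G) yields a rainbow neighbourhood in G + H if and only if v yields a rainbow neighbourhood in G (and symmetrically for vertices of H). Moreover, a set F ⊆ V(G+H) is a fade set of G + H if and only if F ∩ V(G) is a fade set of G and F ∩ V(H) is a fade set of H; hence f(G + H) = f(G) + f(H). -/

import Mathlib

/-! In the join every vertex of `G` is adjacent to every vertex of `H`, and in a chromatic
colouring every colour class is nonempty, so the closed neighbourhood of `v ∈ V(G)` in `G + H`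
meets every colour of `H`: whether `v` is rainbow is decided inside `G`. Likewise, at a rainbow
`v ∈ V(G)` a fade set `F` of `G + H` must leave uncovered a vertex of every colour of `G` in
`N_G[v]`, and merely some vertex of every colour of `H`. The latter holds as soon as `F ∩ V(H)` is
a fade set of `H`, because a chromatic colouring of `H` has a rainbow vertex (otherwise the last
colour class could be recoloured away). So fade sets of `G + H` are exactly the unions of fade
sets of `G` and of `H`, and their maximal sizes add. -/

def closedNbr {V : Type*} [Fintype V] [DecidableEq V] (G : SimpleGraph V)
    [DecidableRel G.Adj] (u : V) : Finset V :=
  insert u (G.neighborFinset u)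

def YieldsRainbow {V : Type*} [Fintype V] [DecidableEq V] (G : SimpleGraph V)
    [DecidableRel G.Adj] {k : ℕ} (c : V → Fin k) (u : V) : Prop :=
  ∀ i : Fin k, ∃ v ∈ closedNbr G u, c v = i

def IsFadeSet {V : Type*} [Fintype V] [DecidableEq V] (G : SimpleGraph V)
    [DecidableRel G.Adj] {k : ℕ} (c : V → Fin k) (F : Finset V) : Prop :=
  ∀ u : V, YieldsRainbow G c u →
    ∀ i : Fin k, ∃ v ∈ closedNbr G u, c v = i ∧ v ∉ F

noncomputable def fadingNumber {V : Type*} [Fintype V] [DecidableEq V]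
    (G : SimpleGraph V) [DecidableRel G.Adj] {k : ℕ} (c : V → Fin k) : ℕ :=
  sSup {m | ∃ F : Finset V, IsFadeSet G c F ∧ F.card = m}

/-- The join `G + H` of two graphs on disjoint vertex sets. -/
def joinGraphs {V W : Type*} (G : SimpleGraph V) (H : SimpleGraph W) :
    SimpleGraph (V ⊕ W) where
  Adj u v :=
    match u, v with
    | .inl a, .inl b => G.Adj a b
    | .inr a, .inr b => H.Adj a b
    | .inl _, .inr _ => True
    | .inr _, .inl _ => True
  symm := by
    constructor
    intro u v h
    match u, v with
    | .inl a, .inl b => exact G.symm.symm _ _ h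
    | .inr a, .inr b => exact H.symm.symm _ _ h
    | .inl _, .inr _ => trivial
    | .inr _, .inl _ => trivial
  loopless := by
    constructor
    intro u h
    match u with
    | .inl a => exact G.loopless.irrefl a h
    | .inr a => exact H.loopless.irrefl a h

instance joinGraphs.decAdj {V W : Type*} (G : SimpleGraph V) (H : SimpleGraph W)
    [DecidableRel G.Adj] [DecidableRel H.Adj] :
    DecidableRel (joinGraphs G H).Adj
  | .inl a, .inl b => inferInstanceAs (Decidable (G.Adj a b))
  | .inr a, .inr b => inferInstanceAs (Decidable (H.Adj a b))
  | .inl _, .inr _ => inferInstanceAs (Decidable True)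
  | .inr _, .inl _ => inferInstanceAs (Decidable True)

/-- The combined colouring of the join, on `χ(G) + χ(H)` colours. -/
def joinColour {V W : Type*} {k m : ℕ} (c : V → Fin k) (d : W → Fin m) :
    V ⊕ W → Fin (k + m) :=
  Sum.elim (fun v => (c v).castAdd m) (fun w => (d w).natAdd k)

lemma castAdd_ne_natAdd {k m : ℕ} (i : Fin k) (j : Fin m) : i.castAdd m ≠ j.natAdd k := by
  simp only [ne_eq, Fin.ext_iff, Fin.val_castAdd, Fin.val_natAdd]
  omega

section Colouring

variable {V : Type*} [Fintype V] [DecidableEq V] (G : SimpleGraph V) [DecidableRel G.Adj]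
  {k : ℕ} (c : V → Fin k)

lemma mem_closedNbr {u v : V} : v ∈ closedNbr G u ↔ v = u ∨ G.Adj u v := by
  simp [closedNbr]

/-- `N[u] ∩ C_i ⊄ F` for every colour class `C_i`. -/
def RainbowOutside (F : Finset V) (u : V) : Prop :=
  ∀ i : Fin k, ∃ v ∈ closedNbr G u, c v = i ∧ v ∉ F

lemma yieldsRainbow_iff_rainbowOutside_empty {u : V} :
    YieldsRainbow G c u ↔ RainbowOutside G c ∅ u := by
  simp [YieldsRainbow, RainbowOutside]

lemma isFadeSet_iff {F : Finset V} :
    IsFadeSet G c F ↔ ∀ u, YieldsRainbow G c u → RainbowOutside G c F u :=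
  Iff.rfl

lemma isFadeSet_empty : IsFadeSet G c ∅ :=
  fun _ hu => (yieldsRainbow_iff_rainbowOutside_empty G c).mp hu

lemma bddAbove_card_isFadeSet : BddAbove {m | ∃ F : Finset V, IsFadeSet G c F ∧ F.card = m} :=
  ⟨Fintype.card V, by rintro _ ⟨F, -, rfl⟩; exact F.card_le_univ⟩

lemma card_le_fadingNumber {F : Finset V} (hF : IsFadeSet G c F) :
    F.card ≤ fadingNumber G c :=
  le_csSup (bddAbove_card_isFadeSet G c) ⟨F, hF, rfl⟩

lemma exists_isFadeSet_card_eq_fadingNumber :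
    ∃ F : Finset V, IsFadeSet G c F ∧ F.card = fadingNumber G c :=
  Nat.sSup_mem (s := {m | ∃ F : Finset V, IsFadeSet G c F ∧ F.card = m})
    ⟨0, ∅, isFadeSet_empty G c, rfl⟩ (bddAbove_card_isFadeSet G c)

end Colouring

section ChromaticColouring

variable {V : Type*} [Fintype V] [DecidableEq V] {G : SimpleGraph V} [DecidableRel G.Adj]

/-- If no vertex sees all `n + 1` colours, recolouring each vertex of the last colour with a colour
missing from its closed neighbourhood gives a proper `n`-colouring. -/
lemma colorable_of_forall_not_yieldsRainbow {n : ℕ} {c : V → Fin (n + 1)}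
    (hc : ∀ u v : V, G.Adj u v → c u ≠ c v) (h : ∀ u, ¬ YieldsRainbow G c u) :
    G.Colorable n := by
  simp only [YieldsRainbow, not_forall, not_exists, not_and] at h
  choose miss hmiss using h
  have hself : ∀ u, c u ≠ miss u := fun u => hmiss u u ((mem_closedNbr G).mpr (.inl rfl))
  have hnbr : ∀ u v, G.Adj u v → c v ≠ miss u :=
    fun u v huv => hmiss u v ((mem_closedNbr G).mpr (.inr huv))
  let c' : V → Fin (n + 1) := fun u => if c u = Fin.last n then miss u else c u
  have hc'_ne_last : ∀ u, c' u ≠ Fin.last n := by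
    intro u
    by_cases hu : c u = Fin.last n
    · simpa [c', hu] using (hself u).symm
    · simp [c', hu]
  have hc' : ∀ u v, G.Adj u v → c' u ≠ c' v := by
    intro u v huv
    have := hc u v huv
    have := hnbr u v huv
    have := hnbr v u huv.symm
    by_cases hu : c u = Fin.last n <;> by_cases hv : c v = Fin.last n <;> grind
  exact ⟨.mk (fun u => (c' u).castPred (hc'_ne_last u))
    fun huv heq => hc' _ _ huv (Fin.castPred_inj.mp heq)⟩

lemma exists_yieldsRainbow {n : ℕ} {c : V → Fin (n + 1)} (hc : ∀ u v : V, G.Adj u v → c u ≠ c v)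
    (hχ : G.chromaticNumber = (n + 1 : ℕ)) : ∃ u, YieldsRainbow G c u := by
  by_contra! h
  have := (colorable_of_forall_not_yieldsRainbow hc h).chromaticNumber_le
  rw [hχ, Nat.cast_le] at this
  omega

variable {k : ℕ} {c : V → Fin k}

/-- A chromatic colouring has a rainbow vertex, and `F` leaves a vertex of every colour uncovered
in its closed neighbourhood. -/
lemma IsFadeSet.exists_notMem {F : Finset V} (hF : IsFadeSet G c F)
    (hc : ∀ u v : V, G.Adj u v → c u ≠ c v) (hχ : G.chromaticNumber = k) (i : Fin k) :
    ∃ v, c v = i ∧ v ∉ F := by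
  cases k with
  | zero => exact i.elim0
  | succ n =>
    obtain ⟨u, hu⟩ := exists_yieldsRainbow hc hχ
    obtain ⟨v, -, hv, hvF⟩ := hF u hu i
    exact ⟨v, hv, hvF⟩

lemma surjective_of_chromaticNumber_eq (hc : ∀ u v : V, G.Adj u v → c u ≠ c v)
    (hχ : G.chromaticNumber = k) : Function.Surjective c := fun i => by
  obtain ⟨v, hv, -⟩ := (isFadeSet_empty G c).exists_notMem hc hχ i
  exact ⟨v, hv⟩

end ChromaticColouring

section Join

variable {V W : Type*} {G : SimpleGraph V} {H : SimpleGraph W}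

@[simp]
lemma joinGraphs_adj_inl_inl {a b : V} : (joinGraphs G H).Adj (.inl a) (.inl b) ↔ G.Adj a b :=
  Iff.rfl

@[simp]
lemma joinGraphs_adj_inr_inr {a b : W} : (joinGraphs G H).Adj (.inr a) (.inr b) ↔ H.Adj a b :=
  Iff.rfl

variable [Fintype V] [DecidableEq V] [Fintype W] [DecidableEq W]
  [DecidableRel G.Adj] [DecidableRel H.Adj] {k m : ℕ} {c : V → Fin k} {d : W → Fin m}

lemma inl_mem_closedNbr_join_inl {a v : V} :
    (.inl a : V ⊕ W) ∈ closedNbr (joinGraphs G H) (.inl v) ↔ a ∈ closedNbr G v := by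
  simp [mem_closedNbr]

lemma inr_mem_closedNbr_join_inr {b w : W} :
    (.inr b : V ⊕ W) ∈ closedNbr (joinGraphs G H) (.inr w) ↔ b ∈ closedNbr H w := by
  simp [mem_closedNbr]

lemma inr_mem_closedNbr_join_inl (v : V) (b : W) :
    (.inr b : V ⊕ W) ∈ closedNbr (joinGraphs G H) (.inl v) :=
  (mem_closedNbr _).mpr (.inr trivial)

lemma inl_mem_closedNbr_join_inr (w : W) (a : V) :
    (.inl a : V ⊕ W) ∈ closedNbr (joinGraphs G H) (.inr w) :=
  (mem_closedNbr _).mpr (.inr trivial)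

lemma rainbowOutside_join_iff {F : Finset (V ⊕ W)} {x : V ⊕ W} :
    RainbowOutside (joinGraphs G H) (joinColour c d) F x ↔
      (∀ i, ∃ a, .inl a ∈ closedNbr (joinGraphs G H) x ∧ c a = i ∧ .inl a ∉ F) ∧
      (∀ j, ∃ b, .inr b ∈ closedNbr (joinGraphs G H) x ∧ d b = j ∧ .inr b ∉ F) := by
  simp [RainbowOutside, Fin.forall_fin_add, Sum.exists, joinColour, castAdd_ne_natAdd,
    (castAdd_ne_natAdd _ _).symm]

lemma rainbowOutside_join_inl_iff {F : Finset (V ⊕ W)} {v : V} :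
    RainbowOutside (joinGraphs G H) (joinColour c d) F (.inl v) ↔
      RainbowOutside G c (F.preimage Sum.inl Sum.inl_injective.injOn) v ∧
      ∀ j, ∃ b, d b = j ∧ b ∉ F.preimage Sum.inr Sum.inr_injective.injOn := by
  rw [rainbowOutside_join_iff]
  simp [RainbowOutside, inl_mem_closedNbr_join_inl,
    inr_mem_closedNbr_join_inl]

lemma rainbowOutside_join_inr_iff {F : Finset (V ⊕ W)} {w : W} :
    RainbowOutside (joinGraphs G H) (joinColour c d) F (.inr w) ↔
      (∀ i, ∃ a, c a = i ∧ a ∉ F.preimage Sum.inl Sum.inl_injective.injOn) ∧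
      RainbowOutside H d (F.preimage Sum.inr Sum.inr_injective.injOn) w := by
  rw [rainbowOutside_join_iff]
  simp [RainbowOutside, inr_mem_closedNbr_join_inr, inl_mem_closedNbr_join_inr]

lemma yieldsRainbow_join_inl_iff (hd : Function.Surjective d) {v : V} :
    YieldsRainbow (joinGraphs G H) (joinColour c d) (.inl v) ↔ YieldsRainbow G c v := by
  simp only [yieldsRainbow_iff_rainbowOutside_empty, rainbowOutside_join_inl_iff,
    Finset.preimage_empty, Finset.notMem_empty, not_false_eq_true, and_true]
  exact and_iff_left hd

lemma yieldsRainbow_join_inr_iff (hc : Function.Surjective c) {w : W} :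
    YieldsRainbow (joinGraphs G H) (joinColour c d) (.inr w) ↔ YieldsRainbow H d w := by
  simp only [yieldsRainbow_iff_rainbowOutside_empty, rainbowOutside_join_inr_iff,
    Finset.preimage_empty, Finset.notMem_empty, not_false_eq_true, and_true]
  exact and_iff_right hc

lemma isFadeSet_join_iff (hc : ∀ u v : V, G.Adj u v → c u ≠ c v)
    (hd : ∀ u v : W, H.Adj u v → d u ≠ d v) (hχG : G.chromaticNumber = k)
    (hχH : H.chromaticNumber = m) {F : Finset (V ⊕ W)} :
    IsFadeSet (joinGraphs G H) (joinColour c d) F ↔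
      IsFadeSet G c (F.preimage Sum.inl Sum.inl_injective.injOn) ∧
      IsFadeSet H d (F.preimage Sum.inr Sum.inr_injective.injOn) := by
  simp only [isFadeSet_iff, Sum.forall,
    yieldsRainbow_join_inl_iff (surjective_of_chromaticNumber_eq hd hχH),
    yieldsRainbow_join_inr_iff (surjective_of_chromaticNumber_eq hc hχG),
    rainbowOutside_join_inl_iff, rainbowOutside_join_inr_iff]
  constructor
  · rintro ⟨hG, hH⟩
    exact ⟨fun v hv => (hG v hv).1, fun w hw => (hH w hw).2⟩
  · rintro ⟨hG, hH⟩
    exact ⟨fun v hv => ⟨hG v hv, IsFadeSet.exists_notMem hH hd hχH⟩,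
      fun w hw => ⟨IsFadeSet.exists_notMem hG hc hχG, hH w hw⟩⟩

end Join

lemma card_preimage_inl_add_card_preimage_inr {V W : Type*} (F : Finset (V ⊕ W)) :
    (F.preimage Sum.inl Sum.inl_injective.injOn).card +
      (F.preimage Sum.inr Sum.inr_injective.injOn).card = F.card := by
  rw [← Finset.card_toLeft_add_card_toRight (u := F)]
  congr 2 <;> ext <;> simp

lemma fadingNumber_eq_add_of_isFadeSet_iff {V W : Type*} [Fintype V] [DecidableEq V]
    [Fintype W] [DecidableEq W] {G : SimpleGraph V} {H : SimpleGraph W}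
    {J : SimpleGraph (V ⊕ W)} [DecidableRel G.Adj] [DecidableRel H.Adj] [DecidableRel J.Adj]
    {k m l : ℕ} {c : V → Fin k} {d : W → Fin m} {e : V ⊕ W → Fin l}
    (h : ∀ F, IsFadeSet J e F ↔ IsFadeSet G c (F.preimage Sum.inl Sum.inl_injective.injOn) ∧
      IsFadeSet H d (F.preimage Sum.inr Sum.inr_injective.injOn)) :
    fadingNumber J e = fadingNumber G c + fadingNumber H d := by
  apply le_antisymm
  · obtain ⟨F, hF, hcard⟩ := exists_isFadeSet_card_eq_fadingNumber J e
    obtain ⟨hFG, hFH⟩ := (h F).mp hF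
    rw [← hcard, ← card_preimage_inl_add_card_preimage_inr F]
    exact add_le_add (card_le_fadingNumber G c hFG) (card_le_fadingNumber H d hFH)
  · obtain ⟨FG, hFG, hcardG⟩ := exists_isFadeSet_card_eq_fadingNumber G c
    obtain ⟨FH, hFH, hcardH⟩ := exists_isFadeSet_card_eq_fadingNumber H d
    have hF : IsFadeSet J e (FG.disjSum FH) := by
      rw [h]
      convert And.intro hFG hFH using 2 <;> ext <;> simp
    calc fadingNumber G c + fadingNumber H d = (FG.disjSum FH).card := by
          rw [Finset.card_disjSum, hcardG, hcardH]
      _ ≤ fadingNumber J e := card_le_fadingNumber J e hF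

theorem stmt_9 {V W : Type*} [Fintype V] [DecidableEq V] [Fintype W] [DecidableEq W]
    (G : SimpleGraph V) (H : SimpleGraph W) [DecidableRel G.Adj] [DecidableRel H.Adj]
    {k m : ℕ} (c : V → Fin k) (d : W → Fin m)
    (hpc : ∀ u v : V, G.Adj u v → c u ≠ c v)
    (hpd : ∀ u v : W, H.Adj u v → d u ≠ d v)
    (hcG : G.chromaticNumber = k) (hcH : H.chromaticNumber = m) :
    (∀ v : V, YieldsRainbow (joinGraphs G H) (joinColour c d) (Sum.inl v) ↔
      YieldsRainbow G c v) ∧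
    (∀ w : W, YieldsRainbow (joinGraphs G H) (joinColour c d) (Sum.inr w) ↔
      YieldsRainbow H d w) ∧
    (∀ F : Finset (V ⊕ W),
      IsFadeSet (joinGraphs G H) (joinColour c d) F ↔
        IsFadeSet G c (F.preimage Sum.inl Sum.inl_injective.injOn) ∧
        IsFadeSet H d (F.preimage Sum.inr Sum.inr_injective.injOn)) ∧
    fadingNumber (joinGraphs G H) (joinColour c d) =
      fadingNumber G c + fadingNumber H d := by
  have hfade (F : Finset (V ⊕ W)) := isFadeSet_join_iff hpc hpd hcG hcH (F := F)
  exact ⟨fun _ => yieldsRainbow_join_inl_iff (surjective_of_chromaticNumber_eq hpd hcH),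
    fun _ => yieldsRainbow_join_inr_iff (surjective_of_chromaticNumber_eq hpc hcG),
    hfade, fadingNumber_eq_add_of_isFadeSet_iff hfade⟩
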